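/- For a matrix Ψ with unit-norm columns and mutual coherence μ, the RIP constant of order s satisfies δ_s ≤ (s−1)μ. -/

import Mathlib

/-!
With `G = Ψᵀ Ψ` the Gram matrix, `‖Ψ x‖² = xᵀ G x`, and `G` has unit diagonal and
off-diagonal entries bounded by `μ`. Hence
`|‖Ψ x‖² - ‖x‖²| ≤ μ ∑_{i ≠ j} |xᵢ| |xⱼ| = μ (‖x‖₁² - ‖x‖²)`,
which is the Gershgorin estimate applied to the quadratic form directly, and Cauchy–Schwarz on
the support of an `s`-sparse `x` gives `‖x‖₁² ≤ s ‖x‖²`.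
-/

open scoped Classical

/-- `x` is `s`-sparse: at most `s` nonzero entries. -/
def Sparse {d : ℕ} (s : ℕ) (x : Fin d → ℝ) : Prop :=
  (Finset.univ.filter fun i => x i ≠ 0).card ≤ s

/-- Squared Euclidean norm. -/
def sqnorm {p : ℕ} (x : Fin p → ℝ) : ℝ := ∑ i, x i ^ 2

open Finset Matrix

section
variable {ι : Type*} [Fintype ι]

lemma sq_sum_abs_le_card_support_mul_sum_sq (x : ι → ℝ) :
    (∑ i, |x i|) ^ 2 ≤ #{i | x i ≠ 0} * ∑ i, x i ^ 2 := by
  have hsupp (f : ι → ℝ) (hf : ∀ i, x i = 0 → f i = 0) :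
      ∑ i ∈ {i | x i ≠ 0}, f i = ∑ i, f i :=
    sum_subset (subset_univ _) fun i _ hi => hf i (by simpa using hi)
  rw [← hsupp _ fun i hi => by simp [hi], ← hsupp _ fun i hi => by simp [hi]]
  simpa only [sq_abs] using sq_sum_le_card_mul_sum_sq (s := {i | x i ≠ 0}) (f := fun i => |x i|)

lemma abs_dotProduct_mulVec_sub_self_le [DecidableEq ι] {G : Matrix ι ι ℝ} {μ : ℝ}
    (hdiag : ∀ i, G i i = 1) (hoff : ∀ i j, i ≠ j → |G i j| ≤ μ) (x : ι → ℝ) :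
    |x ⬝ᵥ G *ᵥ x - x ⬝ᵥ x| ≤ μ * ((∑ i, |x i|) ^ 2 - x ⬝ᵥ x) := by
  have hentry : ∀ i j, |(G - 1) i j| ≤ μ * (1 - (1 : Matrix ι ι ℝ) i j) := by
    intro i j
    rcases eq_or_ne i j with rfl | hij
    · simp [hdiag]
    · simpa [one_apply_ne hij] using hoff i j hij
  calc |x ⬝ᵥ G *ᵥ x - x ⬝ᵥ x| = |∑ i, ∑ j, x i * ((G - 1) i j * x j)| := by
        have hGx : G *ᵥ x - x = (G - 1) *ᵥ x := by rw [sub_mulVec, one_mulVec]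
        rw [← dotProduct_sub, hGx]
        simp only [dotProduct, mulVec, mul_sum]
    _ ≤ ∑ i, ∑ j, |x i| * (μ * (1 - (1 : Matrix ι ι ℝ) i j) * |x j|) := by
      refine (abs_sum_le_sum_abs _ _).trans (sum_le_sum fun i _ => ?_)
      refine (abs_sum_le_sum_abs _ _).trans (sum_le_sum fun j _ => ?_)
      rw [abs_mul, abs_mul]
      gcongr
      exact hentry i j
    _ = μ * ((∑ i, |x i|) ^ 2 - x ⬝ᵥ x) := by
      simp only [mul_sub, sub_mul, mul_one, sum_sub_distrib, one_apply, mul_ite, ite_mul, mul_zero,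
        zero_mul, sum_ite_eq, mem_univ, if_true, sq, sum_mul_sum, dotProduct]
      simp only [← mul_assoc, mul_right_comm _ μ, ← sum_mul, abs_mul_abs_self]
      ring

end

lemma mulVec_dotProduct_mulVec {m n : Type*} [Fintype m] [Fintype n] (A : Matrix m n ℝ)
    (x : n → ℝ) : A *ᵥ x ⬝ᵥ A *ᵥ x = x ⬝ᵥ (Aᵀ * A) *ᵥ x := by
  rw [← mulVec_mulVec, dotProduct_mulVec x, vecMul_transpose]

lemma sqnorm_eq_dotProduct_self {p : ℕ} (x : Fin p → ℝ) : sqnorm x = x ⬝ᵥ x := by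
  simp only [sqnorm, dotProduct, sq]

theorem rip_le_coherence_general (p d s : ℕ)
    (Ψ : Matrix (Fin p) (Fin d) ℝ)
    (hcols : ∀ j, ∑ k, Ψ k j ^ 2 = 1)
    (μ : ℝ) (hμ0 : 0 ≤ μ) (hμ : ∀ i j, i ≠ j → |∑ k, Ψ k i * Ψ k j| ≤ μ) :
    ∀ x : Fin d → ℝ, Sparse s x →
      (1 - ((s : ℝ) - 1) * μ) * sqnorm x ≤ sqnorm (Ψ.mulVec x) ∧
      sqnorm (Ψ.mulVec x) ≤ (1 + ((s : ℝ) - 1) * μ) * sqnorm x := by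
  intro x hx
  have hgram_diag : ∀ i, (Ψᵀ * Ψ) i i = 1 := fun i => by simpa [mul_apply, sq] using hcols i
  have hgram_off : ∀ i j, i ≠ j → |(Ψᵀ * Ψ) i j| ≤ μ := fun i j hij => by
    simpa [mul_apply] using hμ i j hij
  have hl1 : (∑ i, |x i|) ^ 2 ≤ s * sqnorm x :=
    (sq_sum_abs_le_card_support_mul_sum_sq x).trans
      (mul_le_mul_of_nonneg_right (by exact_mod_cast hx) (sum_nonneg fun i _ => sq_nonneg _))
  have hdev : |sqnorm (Ψ *ᵥ x) - sqnorm x| ≤ ((s : ℝ) - 1) * μ * sqnorm x := by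
    simp only [sqnorm_eq_dotProduct_self, mulVec_dotProduct_mulVec] at hl1 ⊢
    calc _ ≤ μ * ((∑ i, |x i|) ^ 2 - x ⬝ᵥ x) :=
          abs_dotProduct_mulVec_sub_self_le hgram_diag hgram_off x
      _ ≤ μ * (s * x ⬝ᵥ x - x ⬝ᵥ x) := by gcongr
      _ = ((s : ℝ) - 1) * μ * x ⬝ᵥ x := by ring
  rw [abs_sub_le_iff] at hdev
  constructor <;> linarith

/-- Coherence bound on the RIP constant: δ_s ≤ (s−1)μ, i.e. Ψ satisfies RIP of
order s with constant (s−1)μ. -/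
theorem rip_le_coherence (p d s : ℕ) (hs : 1 ≤ s)
    (Ψ : Matrix (Fin p) (Fin d) ℝ)
    (hcols : ∀ j, ∑ k, Ψ k j ^ 2 = 1)
    (μ : ℝ) (hμ0 : 0 ≤ μ) (hμ : ∀ i j, i ≠ j → |∑ k, Ψ k i * Ψ k j| ≤ μ) :
    ∀ x : Fin d → ℝ, Sparse s x →
      (1 - ((s : ℝ) - 1) * μ) * sqnorm x ≤ sqnorm (Ψ.mulVec x) ∧
      sqnorm (Ψ.mulVec x) ≤ (1 + ((s : ℝ) - 1) * μ) * sqnorm x :=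
  rip_le_coherence_general p d s Ψ hcols μ hμ0 hμ
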